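/- Let K be a local field of characteristic p, m > 0 an integer prime to p, a ∈ K with v_K(a) = −m, α a root of T^p − T − a, and L = K(α). Then L|K is a totally ramified cyclic extension of degree p whose unique ramification break occurs at m: in the lower (equivalently upper) numbering, Gal(L|K)_m = Gal(L|K) and Gal(L|K)_{m+1} = {1}. -/

import Mathlib

/-!
Let `β` be the image of `α` in `L = K⟮α⟯`. Since `w` restricts to `p • v_K` and `β ^ p - β = a`,
the ultrametric inequality forces `w β = -m`. As `p ∤ m`, the monomials `g β ^ i` (`g ∈ K`,
`0 ≤ i < p`) have pairwise distinct valuations `p v_K(g) - m i`, so a sum of such monomials has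
the valuation of its smallest term. Hence `1, β, …, β ^ (p - 1)` are linearly independent and
`[L : K] = p`. The roots of `T ^ p - T - a` are the `β + c` with `c ∈ 𝔽_p`, so `L | K` is Galois
of prime degree, hence cyclic, and every `σ ≠ 1` sends `β` to `β + c` with `c` a unit.

By the binomial theorem `w ((β + c) ^ i - β ^ i) = w (β ^ i) + m` for `0 < i < p`. An integral
`z` is a sum of integral monomials, and those with `i > 0` have valuation prime to `p`, hence
positive; so `w (σ z - z) ≥ m + 1`. The uniformiser `π ^ s β ^ i` of `L`, with `p s - m i = 1`,
gives `w (σ z - z) = m + 1` exactly.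
-/

open IntermediateField Polynomial

namespace AddValuation

section Ring

variable {R : Type*} [Ring R] {Γ : Type*} [LinearOrderedAddCommMonoidWithTop Γ]
  (v : AddValuation R Γ)

theorem map_sum_eq_of_lt {ι : Type*} [DecidableEq ι] {s : Finset ι} {f : ι → R} {j : ι}
    (hj : j ∈ s) (hf : ∀ i ∈ s \ {j}, v (f j) < v (f i)) :
    v (∑ i ∈ s, f i) = v (f j) := by
  rw [Finset.sum_eq_add_sum_sdiff_singleton_of_mem hj]
  rcases (s \ {j}).eq_empty_or_nonempty with hs | ⟨i, hi⟩
  · rw [hs, Finset.sum_empty, add_zero]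
  · exact v.map_add_eq_of_lt_left (v.map_lt_sum' ((hf i hi).trans_le le_top) hf)

theorem map_sum_eq_inf {ι : Type*} {s : Finset ι} {f : ι → R}
    (hf : ∀ i ∈ s, ∀ j ∈ s, v (f i) = v (f j) → v (f i) ≠ ⊤ → i = j) :
    v (∑ i ∈ s, f i) = s.inf fun i => v (f i) := by
  classical
  rcases s.eq_empty_or_nonempty with rfl | hs
  · simp
  obtain ⟨j, hj, hinf⟩ := s.exists_mem_eq_inf hs fun i => v (f i)
  rw [hinf]
  by_cases htop : v (f j) = ⊤
  · refine htop ▸ top_le_iff.mp (v.map_le_sum fun i hi => ?_)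
    rw [← htop, ← hinf]; exact Finset.inf_le hi
  refine v.map_sum_eq_of_lt hj fun i hi => ?_
  obtain ⟨his, hij⟩ := Finset.mem_sdiff.mp hi
  refine (hinf ▸ Finset.inf_le his).lt_of_ne fun h => ?_
  exact hij (Finset.mem_singleton.mpr (hf j hj i his h htop).symm)

end Ring

section Field

variable {L : Type*} [Field L]

open scoped Classical in
noncomputable def ofIntOfNeZero (w : L → ℤ)
    (hmul : ∀ x y : L, x ≠ 0 → y ≠ 0 → w (x * y) = w x + w y)
    (hadd : ∀ x y : L, x ≠ 0 → y ≠ 0 → x + y ≠ 0 → min (w x) (w y) ≤ w (x + y)) :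
    AddValuation L (WithTop ℤ) :=
  AddValuation.of (fun x => if x = 0 then ⊤ else (w x : WithTop ℤ)) (if_pos rfl)
    (by
      have h := hmul 1 1 one_ne_zero one_ne_zero
      rw [one_mul] at h
      simp only [one_ne_zero, if_false, WithTop.coe_eq_zero]
      omega)
    (fun x y => by
      by_cases hx : x = 0
      · simp [hx]
      by_cases hy : y = 0
      · simp [hy]
      by_cases hxy : x + y = 0
      · simp [hxy]
      simp only [hx, hy, hxy, if_false]
      exact_mod_cast hadd x y hx hy hxy)
    (fun x y => by
      by_cases hx : x = 0
      · simp [hx]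
      by_cases hy : y = 0
      · simp [hy]
      simp only [hx, hy, mul_ne_zero hx hy, if_false]
      exact_mod_cast hmul x y hx hy)

variable {w : L → ℤ} {hmul : ∀ x y : L, x ≠ 0 → y ≠ 0 → w (x * y) = w x + w y}
  {hadd : ∀ x y : L, x ≠ 0 → y ≠ 0 → x + y ≠ 0 → min (w x) (w y) ≤ w (x + y)}

theorem ofIntOfNeZero_apply_of_ne {x : L} (hx : x ≠ 0) : ofIntOfNeZero w hmul hadd x = w x := by
  simp [ofIntOfNeZero, hx]

theorem coe_le_ofIntOfNeZero_iff {t : ℤ} {x : L} :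
    (t : WithTop ℤ) ≤ ofIntOfNeZero w hmul hadd x ↔ x = 0 ∨ t ≤ w x := by
  by_cases hx : x = 0 <;> simp [ofIntOfNeZero, hx]

variable (v : AddValuation L (WithTop ℤ))

theorem map_eq_zero_of_pow_eq_self {n : ℕ} (hn : 1 < n) {x : L} (hx : x ≠ 0) (h : x ^ n = x) :
    v x = 0 := by
  obtain ⟨e, he⟩ := WithTop.ne_top_iff_exists.mp ((v.ne_top_iff).mpr hx)
  have h' := v.map_pow x n
  rw [h, ← he, ← WithTop.coe_nsmul, WithTop.coe_eq_coe, nsmul_eq_mul] at h'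
  rw [← he, WithTop.coe_eq_zero]
  have : ((n : ℤ) - 1) * e = 0 := by linarith
  exact (mul_eq_zero.mp this).resolve_left (by omega)

theorem map_natCast_eq_zero (p : ℕ) [Fact p.Prime] [CharP L p] {n : ℕ} (hn : (n : L) ≠ 0) :
    v n = 0 :=
  v.map_eq_zero_of_pow_eq_self (Fact.out : p.Prime).one_lt hn
    (by rw [← frobenius_def, map_natCast])

theorem map_eq_of_map_pow_sub_self {n : ℕ} (hn : 1 < n) {x : L} {e : ℤ} (he : e < 0)
    (h : v (x ^ n - x) = ((n * e : ℤ) : WithTop ℤ)) : v x = e := by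
  have hn' : (1 : ℤ) < n := by exact_mod_cast hn
  have hx : v x < 0 := by
    by_contra! hx
    have hxn : 0 ≤ v (x ^ n) := by rw [v.map_pow]; exact nsmul_nonneg hx n
    have := le_trans (le_min hxn hx) (v.map_sub _ _)
    rw [h, ← WithTop.coe_zero, WithTop.coe_le_coe] at this
    nlinarith
  obtain ⟨f, hf⟩ := WithTop.ne_top_iff_exists.mp (ne_top_of_lt hx)
  rw [← hf, ← WithTop.coe_zero, WithTop.coe_lt_coe] at hx
  have hlt : v (x ^ n) < v x := by
    rw [v.map_pow, ← hf, ← WithTop.coe_nsmul, WithTop.coe_lt_coe, nsmul_eq_mul]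
    nlinarith
  rw [v.map_sub_eq_of_lt_left hlt, v.map_pow, ← hf, ← WithTop.coe_nsmul, WithTop.coe_eq_coe,
    nsmul_eq_mul] at h
  rw [← hf, WithTop.coe_eq_coe]
  exact mul_left_cancel₀ (by omega) h

theorem map_pow_mul_pow {x c : L} {e d : ℤ} (hx : v x = e) (hc : v c = d) (j k : ℕ) :
    v (x ^ j * c ^ k) = ((j * e + k * d : ℤ) : WithTop ℤ) := by
  rw [v.map_mul, v.map_pow, v.map_pow, hx, hc, ← WithTop.coe_nsmul, ← WithTop.coe_nsmul,
    ← WithTop.coe_add, nsmul_eq_mul, nsmul_eq_mul]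

theorem map_add_pow_sub_pow (p : ℕ) [Fact p.Prime] [CharP L p] {x c : L} {e d : ℤ}
    (hx : v x = e) (hc : v c = d) (hed : e < d) {i : ℕ} (hi : (i : L) ≠ 0) :
    v ((x + c) ^ i - x ^ i) = (((i - 1) * e + d : ℤ) : WithTop ℤ) := by
  classical
  have hi0 : i ≠ 0 := by rintro rfl; exact hi Nat.cast_zero
  obtain ⟨n, rfl⟩ := Nat.exists_eq_add_one_of_ne_zero hi0
  rw [add_pow, Finset.sum_range_succ, Nat.sub_self, pow_zero, Nat.choose_self, Nat.cast_one,
    mul_one, mul_one, add_sub_cancel_right]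
  have hlast :
      v (x ^ n * c ^ (n + 1 - n) * ((n + 1).choose n : L)) = ((n * e + d : ℤ) : WithTop ℤ) := by
    rw [v.map_mul, v.map_pow_mul_pow hx hc, Nat.add_sub_cancel_left, Nat.choose_succ_self_right,
      v.map_natCast_eq_zero p hi, add_zero]
    simp
  -- only the term `x ^ (i - 1) * c * i` of the binomial expansion has minimal valuation
  rw [v.map_sum_eq_of_lt (Finset.self_mem_range_succ n), hlast]
  · congr 1; push_cast; ring
  intro j hj
  simp only [Finset.mem_sdiff, Finset.mem_range, Finset.mem_singleton] at hj
  rw [hlast]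
  by_cases hch : ((n + 1).choose j : L) = 0
  · rw [hch, mul_zero, v.map_zero]; exact WithTop.coe_lt_top _
  rw [v.map_mul, v.map_pow_mul_pow hx hc, v.map_natCast_eq_zero p hch, add_zero,
    WithTop.coe_lt_coe]
  have hjn : j < n := by omega
  have : ((n + 1 - j : ℕ) : ℤ) = n + 1 - j := by push_cast [hjn.le.trans n.le_succ]; ring
  rw [this]
  have : (j : ℤ) < n := by exact_mod_cast hjn
  nlinarith

end Field

end AddValuation

theorem sub_pow_char_eq_sub_of_pow_sub_eq {p : ℕ} [Fact p.Prime] {R : Type*} [CommRing R]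
    [CharP R p] {x y : R} (h : x ^ p - x = y ^ p - y) : (x - y) ^ p = x - y := by
  rw [sub_pow_char]; linear_combination h

theorem IntermediateField.AdjoinSimple.algEquiv_eq_refl {K F : Type*} [Field K] [Field F]
    [Algebra K F] {α : F} {σ : K⟮α⟯ ≃ₐ[K] K⟮α⟯}
    (h : σ (AdjoinSimple.gen K α) = AdjoinSimple.gen K α) : σ = AlgEquiv.refl :=
  AlgEquiv.coe_toAlgHom_injective <| adjoin_algHom_ext K fun x hx => by
    rw [Set.mem_singleton_iff] at hx; subst hx; exact h

theorem eq_of_prime_mul_sub_mul_eq {p m i j : ℕ} (hp : p.Prime) (hmp : ¬ p ∣ m) (hi : i < p)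
    (hj : j < p) {n n' : ℤ} (h : p * n - m * i = p * n' - m * j) : i = j := by
  have hdvd : (p : ℤ) ∣ m * ((i : ℤ) - j) := ⟨n - n', by linear_combination -h⟩
  rcases Int.Prime.dvd_mul' hp hdvd with hm | hij
  · exact absurd (Int.natCast_dvd_natCast.mp hm) hmp
  · have := Int.eq_zero_of_abs_lt_dvd hij (by rw [abs_lt]; omega)
    omega

theorem exists_prime_mul_eq_mul_add_one {p m : ℕ} [Fact p.Prime] (hmp : ¬ p ∣ m) :
    ∃ i s : ℕ, p * s = m * i + 1 := by
  have hm : (m : ZMod p) ≠ 0 := by rwa [Ne, ZMod.natCast_eq_zero_iff]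
  obtain ⟨s, hs⟩ : p ∣ m * (-(m : ZMod p)⁻¹).val + 1 := by
    rw [← ZMod.natCast_eq_zero_iff]
    push_cast
    rw [ZMod.natCast_val, ZMod.cast_id', id, mul_neg, mul_inv_cancel₀ hm, neg_add_cancel]
  exact ⟨_, s, hs.symm⟩

theorem WithTop.coe_add_one_le_add_coe {x : WithTop ℤ} (h0 : 0 ≤ x) (hx : x ≠ 0) (t : ℤ) :
    ((t + 1 : ℤ) : WithTop ℤ) ≤ x + t := by
  induction x using WithTop.recTopCoe with
  | top => simp
  | coe e =>
    norm_cast at *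
    omega

/-- `G_t` in the lower numbering: `σ` acts trivially on `𝒪_L / 𝔪_L ^ (t + 1)`. -/
def lowerRamification (K : Type*) {L : Type*} [Field K] [Field L] [Algebra K L]
    (ν : AddValuation L (WithTop ℤ)) (t : ℤ) : Set (L ≃ₐ[K] L) :=
  {σ | ∀ z, 0 ≤ ν z → ((t + 1 : ℤ) : WithTop ℤ) ≤ ν (σ z - z)}

theorem AddValuation.mem_lowerRamification_ofIntOfNeZero_iff {K L : Type*} [Field K] [Field L]
    [Algebra K L] {w : L → ℤ} {hmul : ∀ x y : L, x ≠ 0 → y ≠ 0 → w (x * y) = w x + w y}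
    {hadd : ∀ x y : L, x ≠ 0 → y ≠ 0 → x + y ≠ 0 → min (w x) (w y) ≤ w (x + y)}
    {σ : L ≃ₐ[K] L} {t : ℤ} :
    σ ∈ lowerRamification K (ofIntOfNeZero w hmul hadd) t ↔
      ∀ z, (z = 0 ∨ 0 ≤ w z) → σ z = z ∨ t + 1 ≤ w (σ z - z) := by
  simp only [lowerRamification, Set.mem_ofPred_eq, ← WithTop.coe_zero, coe_le_ofIntOfNeZero_iff,
    sub_eq_zero]

section Polynomial

variable (p : ℕ) {K : Type*} [Field K]

noncomputable def artinSchreier (a : K) : K[X] := X ^ p - X - C a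

variable {p} {a : K}

theorem artinSchreier_eq_X_pow_sub : artinSchreier p a = X ^ p - (X + C a) := sub_sub _ _ _

theorem aeval_artinSchreier {A : Type*} [CommRing A] [Algebra K A] (x : A) :
    aeval x (artinSchreier p a) = x ^ p - x - algebraMap K A a := by
  simp [artinSchreier]

theorem separable_artinSchreier [CharP K p] : (artinSchreier p a).Separable := by
  have : derivative (artinSchreier p a) = -1 := by
    simp [artinSchreier, derivative_X_pow]
  rw [separable_def, this]
  exact ⟨0, -1, by ring⟩

variable [hp : Fact p.Prime]

theorem monic_artinSchreier : (artinSchreier p a).Monic := by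
  rw [artinSchreier_eq_X_pow_sub]
  exact monic_X_pow_sub (by rw [degree_X_add_C]; exact_mod_cast hp.out.one_lt)

theorem natDegree_artinSchreier : (artinSchreier p a).natDegree = p := by
  rw [artinSchreier_eq_X_pow_sub, natDegree_sub_eq_left_of_natDegree_lt, natDegree_X_pow]
  rw [natDegree_X_pow, natDegree_X_add_C]
  exact hp.out.one_lt

theorem map_artinSchreier_eq_comp {L : Type*} [Field L] [Algebra K L] [CharP L p] {β : L}
    (hβ : β ^ p - β = algebraMap K L a) :
    (artinSchreier p a).map (algebraMap K L) = (X ^ p - X : L[X]).comp (X - C β) := by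
  rw [sub_comp, pow_comp, X_comp, sub_pow_char, ← C_pow, artinSchreier, Polynomial.map_sub,
    Polynomial.map_sub, Polynomial.map_pow, map_X, map_C, ← hβ, C_sub]
  ring

theorem splits_map_artinSchreier {L : Type*} [Field L] [Algebra K L] [CharP L p] {β : L}
    (hβ : β ^ p - β = algebraMap K L a) : ((artinSchreier p a).map (algebraMap K L)).Splits := by
  have := (GaloisField.splits_zmod_X_pow_sub_X p).map (ZMod.castHom dvd_rfl L)
  rw [Polynomial.map_sub, Polynomial.map_pow, map_X] at this
  rw [map_artinSchreier_eq_comp hβ]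
  exact this.comp_X_sub_C β

end Polynomial

namespace ArtinSchreier

section Valuation

variable {p : ℕ} {K L : Type*} [Field K] [Field L] [Algebra K L]
  {ν : AddValuation L (WithTop ℤ)} {vK : AddValuation K (WithTop ℤ)} {m : ℕ} {β : L}

theorem map_smul_pow (hν : ∀ x, x ≠ 0 → ν (algebraMap K L x) = p • vK x)
    (hβ : ν β = ((-m : ℤ) : WithTop ℤ)) {g : K} {n : ℤ} (hg : vK g = n) (i : ℕ) :
    ν (g • β ^ i) = ((p * n - m * i : ℤ) : WithTop ℤ) := by
  rw [Algebra.smul_def, ν.map_mul, hν g (vK.ne_top_iff.mp (hg ▸ WithTop.coe_ne_top)), hg,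
    ν.map_pow, hβ, ← WithTop.coe_nsmul, ← WithTop.coe_nsmul, ← WithTop.coe_add,
    WithTop.coe_eq_coe, nsmul_eq_mul, nsmul_eq_mul]
  ring

theorem exists_map_smul_pow (hν : ∀ x, x ≠ 0 → ν (algebraMap K L x) = p • vK x)
    (hβ : ν β = ((-m : ℤ) : WithTop ℤ)) {g : K} (hg : g ≠ 0) (i : ℕ) :
    ∃ n : ℤ, ν (g • β ^ i) = ((p * n - m * i : ℤ) : WithTop ℤ) := by
  obtain ⟨n, hn⟩ := WithTop.ne_top_iff_exists.mp (vK.ne_top_iff.mpr hg)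
  exact ⟨n, map_smul_pow hν hβ hn.symm i⟩

variable [hp : Fact p.Prime]

theorem map_root (hν : ∀ x, x ≠ 0 → ν (algebraMap K L x) = p • vK x) (hm : 0 < m) {a : K}
    (ha0 : a ≠ 0) (ha : vK a = ((-m : ℤ) : WithTop ℤ)) (hβ : β ^ p - β = algebraMap K L a) :
    ν β = ((-m : ℤ) : WithTop ℤ) :=
  ν.map_eq_of_map_pow_sub_self hp.out.one_lt (by omega) (by
    rw [hβ, hν a ha0, ha, ← WithTop.coe_nsmul, nsmul_eq_mul])

theorem map_smul_pow_ne_zero (hν : ∀ x, x ≠ 0 → ν (algebraMap K L x) = p • vK x)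
    (hβ : ν β = ((-m : ℤ) : WithTop ℤ)) (hmp : ¬ p ∣ m) (g : K) {i : ℕ} (hi0 : i ≠ 0)
    (hip : i < p) : ν (g • β ^ i) ≠ 0 := by
  rcases eq_or_ne g 0 with rfl | hg
  · simp
  obtain ⟨n, hn⟩ := exists_map_smul_pow hν hβ hg i
  rw [hn, Ne, WithTop.coe_eq_zero]
  intro h
  exact hi0 (eq_of_prime_mul_sub_mul_eq hp.out hmp hip hp.out.pos (n' := 0) (by simpa using h))

theorem map_sum_smul_pow (hν : ∀ x, x ≠ 0 → ν (algebraMap K L x) = p • vK x)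
    (hβ : ν β = ((-m : ℤ) : WithTop ℤ)) (hmp : ¬ p ∣ m) (g : Fin p → K) :
    ν (∑ i, g i • β ^ (i : ℕ)) = Finset.univ.inf fun i => ν (g i • β ^ (i : ℕ)) := by
  refine ν.map_sum_eq_inf fun i _ j _ hij hi => Fin.ext ?_
  have hgi : g i ≠ 0 := by rintro h; simp [h] at hi
  have hgj : g j ≠ 0 := by rintro h; rw [h, zero_smul, ν.map_zero] at hij; exact hi hij
  obtain ⟨n, hn⟩ := exists_map_smul_pow hν hβ hgi i
  obtain ⟨n', hn'⟩ := exists_map_smul_pow hν hβ hgj j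
  rw [hn, hn', WithTop.coe_eq_coe] at hij
  exact eq_of_prime_mul_sub_mul_eq hp.out hmp i.isLt j.isLt hij

theorem linearIndependent_pow (hν : ∀ x, x ≠ 0 → ν (algebraMap K L x) = p • vK x)
    (hβ : ν β = ((-m : ℤ) : WithTop ℤ)) (hmp : ¬ p ∣ m) :
    LinearIndependent K fun i : Fin p => β ^ (i : ℕ) := by
  have hβ0 : β ≠ 0 := ν.ne_top_iff.mp (by rw [hβ]; exact WithTop.coe_ne_top)
  refine Fintype.linearIndependent_iff.mpr fun g hg i => ?_
  have h := map_sum_smul_pow hν hβ hmp g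
  rw [hg, ν.map_zero, eq_comm, Finset.inf_eq_top_iff] at h
  simpa [hβ0] using ν.top_iff.mp (h i (Finset.mem_univ i))

theorem map_smul_pow_sub_pow [CharP L p] (hβ : ν β = ((-m : ℤ) : WithTop ℤ)) (hm : 0 < m)
    {γ : L} (hγ : ν (γ - β) = 0) {i : ℕ} (hi : (i : L) ≠ 0) (g : K) :
    ν (g • (γ ^ i - β ^ i)) = ν (g • β ^ i) + (m : ℤ) := by
  have h := ν.map_add_pow_sub_pow p hβ (hγ.trans WithTop.coe_zero.symm) (by omega) hi
  rw [add_sub_cancel] at h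
  rw [Algebra.smul_def, Algebra.smul_def, ν.map_mul, ν.map_mul, h, ν.map_pow, hβ, add_assoc,
    ← WithTop.coe_nsmul, ← WithTop.coe_add]
  congr 2
  rw [nsmul_eq_mul]; ring

end Valuation

variable {p : ℕ} {K F : Type*} [Field K] [Field F] [Algebra K F] {a : K} {α : F}

theorem gen_pow_sub_gen (hα : α ^ p - α = algebraMap K F a) :
    AdjoinSimple.gen K α ^ p - AdjoinSimple.gen K α = algebraMap K K⟮α⟯ a := by
  apply (algebraMap K⟮α⟯ F).injective
  rw [map_sub, map_pow, AdjoinSimple.algebraMap_gen, ← IsScalarTower.algebraMap_apply, hα]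

variable [hp : Fact p.Prime]

theorem isIntegral (hα : α ^ p - α = algebraMap K F a) : IsIntegral K α :=
  ⟨artinSchreier p a, monic_artinSchreier, by rw [← aeval_def, aeval_artinSchreier, hα, sub_self]⟩

theorem finrank_adjoin_le (hα : α ^ p - α = algebraMap K F a) : Module.finrank K K⟮α⟯ ≤ p := by
  rw [adjoin.finrank (isIntegral hα), ← natDegree_artinSchreier (p := p) (a := a)]
  exact natDegree_le_of_dvd (minpoly.dvd K α (by rw [aeval_artinSchreier, hα, sub_self]))
    monic_artinSchreier.ne_zero

theorem isSplittingField_adjoin [CharP K p] (hα : α ^ p - α = algebraMap K F a) :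
    IsSplittingField K K⟮α⟯ (artinSchreier p a) := by
  have : CharP K⟮α⟯ p := (Algebra.charP_iff K _ p).mp ‹_›
  refine ⟨splits_map_artinSchreier (gen_pow_sub_gen hα), ?_⟩
  rw [eq_top_iff, ← (adjoin.powerBasis (isIntegral hα)).adjoin_gen_eq_top]
  refine Algebra.adjoin_mono (Set.singleton_subset_iff.mpr ?_)
  rw [adjoin.powerBasis_gen, mem_rootSet_of_ne monic_artinSchreier.ne_zero, aeval_artinSchreier,
    gen_pow_sub_gen hα, sub_self]

theorem isGalois_adjoin [CharP K p] (hα : α ^ p - α = algebraMap K F a) : IsGalois K K⟮α⟯ :=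
  haveI := isSplittingField_adjoin hα
  IsGalois.of_separable_splitting_field (separable_artinSchreier (p := p) (a := a))

variable {ν : AddValuation K⟮α⟯ (WithTop ℤ)} {vK : AddValuation K (WithTop ℤ)} {m : ℕ}

theorem finrank_adjoin (hα : α ^ p - α = algebraMap K F a)
    (hν : ∀ x, x ≠ 0 → ν (algebraMap K K⟮α⟯ x) = p • vK x)
    (hβ : ν (AdjoinSimple.gen K α) = ((-m : ℤ) : WithTop ℤ)) (hmp : ¬ p ∣ m) :
    Module.finrank K K⟮α⟯ = p := by
  have := adjoin.finiteDimensional (isIntegral hα)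
  refine le_antisymm (finrank_adjoin_le hα) ?_
  simpa using (linearIndependent_pow hν hβ hmp).fintype_card_le_finrank

theorem map_apply_gen_sub_gen [CharP K p] (hα : α ^ p - α = algebraMap K F a)
    {σ : K⟮α⟯ ≃ₐ[K] K⟮α⟯} (hσ : σ ≠ AlgEquiv.refl) :
    ν (σ (AdjoinSimple.gen K α) - AdjoinSimple.gen K α) = 0 := by
  have : CharP K⟮α⟯ p := (Algebra.charP_iff K _ p).mp ‹_›
  refine ν.map_eq_zero_of_pow_eq_self hp.out.one_lt
    (sub_ne_zero.mpr fun h => hσ (AdjoinSimple.algEquiv_eq_refl h))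
    (sub_pow_char_eq_sub_of_pow_sub_eq ?_)
  rw [← map_pow, ← map_sub, gen_pow_sub_gen hα, AlgEquiv.commutes]

theorem mem_lowerRamification [CharP K p] (hα : α ^ p - α = algebraMap K F a)
    (hν : ∀ x, x ≠ 0 → ν (algebraMap K K⟮α⟯ x) = p • vK x)
    (hβ : ν (AdjoinSimple.gen K α) = ((-m : ℤ) : WithTop ℤ)) (hm : 0 < m) (hmp : ¬ p ∣ m)
    (σ : K⟮α⟯ ≃ₐ[K] K⟮α⟯) : σ ∈ lowerRamification K ν m := by
  have : CharP K⟮α⟯ p := (Algebra.charP_iff K _ p).mp ‹_›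
  set β := AdjoinSimple.gen K α
  intro z hz
  rcases eq_or_ne σ AlgEquiv.refl with rfl | hσ
  · simp
  let b := basisOfLinearIndependentOfCardEqFinrank (linearIndependent_pow hν hβ hmp)
    (by rw [Fintype.card_fin, finrank_adjoin hα hν hβ hmp])
  have hz_sum : z = ∑ i, b.repr z i • β ^ (i : ℕ) := by
    conv_lhs => rw [← b.sum_repr z]
    simp only [b, coe_basisOfLinearIndependentOfCardEqFinrank, β]
  rw [hz_sum, map_sum_smul_pow hν hβ hmp, Finset.le_inf_iff] at hz
  rw [hz_sum, map_sum, ← Finset.sum_sub_distrib]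
  refine ν.map_le_sum fun i _ => ?_
  rw [map_smul, map_pow, ← smul_sub]
  rcases eq_or_ne ((i : ℕ) : K⟮α⟯) 0 with hi | hi
  · have : (i : ℕ) = 0 :=
      Nat.eq_zero_of_dvd_of_lt ((CharP.cast_eq_zero_iff K⟮α⟯ p _).mp hi) i.isLt
    simp [this]
  rw [map_smul_pow_sub_pow hβ hm (map_apply_gen_sub_gen hα hσ) hi]
  exact WithTop.coe_add_one_le_add_coe (hz i (Finset.mem_univ i))
    (map_smul_pow_ne_zero hν hβ hmp _ (by rintro h; simp [h] at hi) i.isLt) m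

theorem eq_refl_of_mem_lowerRamification [CharP K p] (hα : α ^ p - α = algebraMap K F a)
    (hν : ∀ x, x ≠ 0 → ν (algebraMap K K⟮α⟯ x) = p • vK x)
    (hβ : ν (AdjoinSimple.gen K α) = ((-m : ℤ) : WithTop ℤ)) (hm : 0 < m) (hmp : ¬ p ∣ m)
    {π : K} (hπ : vK π = 1) {σ : K⟮α⟯ ≃ₐ[K] K⟮α⟯} (hσ : σ ∈ lowerRamification K ν (m + 1)) :
    σ = AlgEquiv.refl := by
  have : CharP K⟮α⟯ p := (Algebra.charP_iff K _ p).mp ‹_›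
  set β := AdjoinSimple.gen K α
  by_contra hne
  obtain ⟨i, s, his⟩ := exists_prime_mul_eq_mul_add_one hmp
  -- `π ^ s • β ^ i` is a uniformiser of `K⟮α⟯`
  have hi : ((i : ℕ) : K⟮α⟯) ≠ 0 := by
    rw [Ne, CharP.cast_eq_zero_iff _ p]
    intro hpi
    exact hp.out.not_dvd_one ((Nat.dvd_add_right (dvd_mul_of_dvd_right hpi m)).mp ⟨s, his.symm⟩)
  have hπs : vK (π ^ s) = (s : ℤ) := by
    rw [vK.map_pow, hπ, ← WithTop.coe_one, ← WithTop.coe_nsmul, nsmul_one]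
  have hz : ν (π ^ s • β ^ i) = 1 := by
    rw [map_smul_pow hν hβ hπs, ← WithTop.coe_one, WithTop.coe_eq_coe]
    have : (p * s : ℤ) = m * i + 1 := by exact_mod_cast his
    linarith
  have h := hσ _ (hz ▸ zero_le_one)
  rw [map_smul, map_pow, ← smul_sub, map_smul_pow_sub_pow hβ hm (map_apply_gen_sub_gen hα hne) hi,
    hz] at h
  norm_cast at h
  omega

end ArtinSchreier

theorem stmt15_general (p : ℕ) [Fact p.Prime] (k : Type*) [Field k] [CharP k p]
    (m : ℕ) (hm : 0 < m) (hmp : ¬ p ∣ m)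
    (a : LaurentSeries k) (ha0 : a ≠ 0) (ha : a.order = -(m : ℤ))
    (α : AlgebraicClosure (LaurentSeries k))
    (hα : α ^ p - α = algebraMap (LaurentSeries k) (AlgebraicClosure (LaurentSeries k)) a)
    (w : (LaurentSeries k)⟮α⟯ → ℤ)
    (hw_mul : ∀ u v : (LaurentSeries k)⟮α⟯, u ≠ 0 → v ≠ 0 → w (u * v) = w u + w v)
    (hw_add : ∀ u v : (LaurentSeries k)⟮α⟯, u ≠ 0 → v ≠ 0 → u + v ≠ 0 →
      min (w u) (w v) ≤ w (u + v))
    (hw_ext : ∀ z : LaurentSeries k, z ≠ 0 →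
      w (algebraMap (LaurentSeries k) (LaurentSeries k)⟮α⟯ z) = p * z.order) :
    IsGalois (LaurentSeries k) (LaurentSeries k)⟮α⟯ ∧
      IsCyclic ((LaurentSeries k)⟮α⟯ ≃ₐ[LaurentSeries k] (LaurentSeries k)⟮α⟯) ∧
      Module.finrank (LaurentSeries k) (LaurentSeries k)⟮α⟯ = p ∧
      (∀ σ : (LaurentSeries k)⟮α⟯ ≃ₐ[LaurentSeries k] (LaurentSeries k)⟮α⟯,
        ∀ z : (LaurentSeries k)⟮α⟯, (z = 0 ∨ 0 ≤ w z) →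
          σ z = z ∨ (m : ℤ) + 1 ≤ w (σ z - z)) ∧
      (∀ σ : (LaurentSeries k)⟮α⟯ ≃ₐ[LaurentSeries k] (LaurentSeries k)⟮α⟯,
        (∀ z : (LaurentSeries k)⟮α⟯, (z = 0 ∨ 0 ≤ w z) →
          σ z = z ∨ (m : ℤ) + 2 ≤ w (σ z - z)) → σ = AlgEquiv.refl) := by
  have : CharP (LaurentSeries k) p := charP_of_injective_algebraMap (algebraMap k _).injective p
  have hν : ∀ z, z ≠ 0 → AddValuation.ofIntOfNeZero w hw_mul hw_add (algebraMap _ _ z) =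
      p • HahnSeries.addVal ℤ k z := fun z hz => by
    rw [AddValuation.ofIntOfNeZero_apply_of_ne ((_root_.map_ne_zero _).mpr hz), hw_ext z hz,
      HahnSeries.addVal_apply_of_ne hz, ← WithTop.coe_nsmul, nsmul_eq_mul]
  have hβ := ArtinSchreier.map_root hν hm ha0 (by rw [HahnSeries.addVal_apply_of_ne ha0, ha])
    (ArtinSchreier.gen_pow_sub_gen hα)
  have hfinrank := ArtinSchreier.finrank_adjoin hα hν hβ hmp
  have := adjoin.finiteDimensional (ArtinSchreier.isIntegral hα)
  have hGalois := ArtinSchreier.isGalois_adjoin hα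
  refine ⟨hGalois, isCyclic_of_prime_card (by rw [IsGalois.card_aut_eq_finrank, hfinrank]), hfinrank,
    fun σ => ?_, fun σ hσ => ?_⟩
  · exact AddValuation.mem_lowerRamification_ofIntOfNeZero_iff.mp
      (ArtinSchreier.mem_lowerRamification hα hν hβ hm hmp σ)
  · refine ArtinSchreier.eq_refl_of_mem_lowerRamification hα hν hβ hm hmp
      (π := HahnSeries.single 1 1) (by simp) ?_
    refine AddValuation.mem_lowerRamification_ofIntOfNeZero_iff.mpr fun z hz => ?_
    simpa only [add_assoc, one_add_one_eq_two] using hσ z hz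

theorem stmt15 (p : ℕ) [Fact p.Prime] (k : Type*) [Field k] [Fintype k] [CharP k p]
    (m : ℕ) (hm : 0 < m) (hmp : ¬ p ∣ m)
    (a : LaurentSeries k) (ha0 : a ≠ 0) (ha : a.order = -(m : ℤ))
    (α : AlgebraicClosure (LaurentSeries k))
    (hα : α ^ p - α = algebraMap (LaurentSeries k) (AlgebraicClosure (LaurentSeries k)) a)
    (w : (LaurentSeries k)⟮α⟯ → ℤ)
    (hw_mul : ∀ u v : (LaurentSeries k)⟮α⟯, u ≠ 0 → v ≠ 0 → w (u * v) = w u + w v)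
    (hw_add : ∀ u v : (LaurentSeries k)⟮α⟯, u ≠ 0 → v ≠ 0 → u + v ≠ 0 →
      min (w u) (w v) ≤ w (u + v))
    (hw_ext : ∀ z : LaurentSeries k, z ≠ 0 →
      w (algebraMap (LaurentSeries k) (LaurentSeries k)⟮α⟯ z) = p * z.order) :
    IsGalois (LaurentSeries k) (LaurentSeries k)⟮α⟯ ∧
      IsCyclic ((LaurentSeries k)⟮α⟯ ≃ₐ[LaurentSeries k] (LaurentSeries k)⟮α⟯) ∧
      Module.finrank (LaurentSeries k) (LaurentSeries k)⟮α⟯ = p ∧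
      (∀ σ : (LaurentSeries k)⟮α⟯ ≃ₐ[LaurentSeries k] (LaurentSeries k)⟮α⟯,
        ∀ z : (LaurentSeries k)⟮α⟯, (z = 0 ∨ 0 ≤ w z) →
          σ z = z ∨ (m : ℤ) + 1 ≤ w (σ z - z)) ∧
      (∀ σ : (LaurentSeries k)⟮α⟯ ≃ₐ[LaurentSeries k] (LaurentSeries k)⟮α⟯,
        (∀ z : (LaurentSeries k)⟮α⟯, (z = 0 ∨ 0 ≤ w z) →
          σ z = z ∨ (m : ℤ) + 2 ≤ w (σ z - z)) → σ = AlgEquiv.refl) :=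
  stmt15_general p k m hm hmp a ha0 ha α hα w hw_mul hw_add hw_ext
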